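/- Let U_ad = {v ∈ L²(Ω) : a ≤ v(x) ≤ b a.e.} with a < b, let J : L²(Ω) → ℝ be twice continuously (Gâteaux/Fréchet) differentiable, and let ū ∈ U_ad satisfy the first-order condition J'(ū)(u − ū) ≥ 0 for all u ∈ U_ad. Suppose there exist κ > 0, α > 0, γ ∈ (0,1] such that J'(ū)(u − ū) + J''(ū)(u − ū)² ≥ κ‖u − ū‖_{L¹}^{1+1/γ} for all u ∈ U_ad with ‖u − ū‖_{L¹} < α, and suppose the second-variation continuity estimate holds: for every ε > 0 there exists δ_ε > 0 with |[J''(u_θ) − J''(ū)](u − ū)²| ≤ ε‖u − ū‖_{L¹}^{1+1/γ} whenever ‖u − ū‖_{L¹} < δ_ε, where u_θ = ū + θ(u − ū), θ ∈ [0,1] measurable. Then there exist κ' > 0 and α' > 0 such that J(u) − J(ū) ≥ κ'‖u − ū‖_{L¹}^{1+1/γ} for all u ∈ U_ad with ‖u − ū‖_{L¹} < α'; in particular ū is a strict local minimizer in the L¹ sense. -/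

import Mathlib

open MeasureTheory Real Set

/-! With `ε = κ / 2` in the continuity estimate, replacing `J''(u_θ)` by `J''(ū)` costs at most
half of the growth `κ ‖u - ū‖₁^(1+1/γ)`; since `J'(ū)(u - ū) ≥ 0`, halving the first variation
in `J'(ū) + ½ J''(ū)` loses nothing, so `κ / 4` survives in the Taylor expansion. -/

theorem taylor_lower_bound_of_growth {j₁ j₂ j₂θ κ p : ℝ} (hj₁ : 0 ≤ j₁)
    (hgrowth : κ * p ≤ j₁ + j₂) (hclose : |j₂θ - j₂| ≤ κ / 2 * p) :
    κ / 4 * p ≤ j₁ + 1 / 2 * j₂θ := by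
  linarith [(abs_le.mp hclose).1]

theorem strict_local_growth_general
    {Ω : Type*} [MeasurableSpace Ω] (μ : Measure Ω)
    (J : (Ω → ℝ) → ℝ)
    (J' : (Ω → ℝ) → (Ω → ℝ) → ℝ)    -- first directional derivative
    (J'' : (Ω → ℝ) → (Ω → ℝ) → ℝ)   -- second derivative along the repeated direction
    (Uad : Set (Ω → ℝ))
    (ubar : Ω → ℝ)
    (hfoc : ∀ u ∈ Uad, 0 ≤ J' ubar (fun x => u x - ubar x))
    (κ α γ : ℝ) (hκ : 0 < κ) (hα : 0 < α)
    (hgrowth : ∀ u ∈ Uad, (∫ x, |u x - ubar x| ∂μ) < α →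
      κ * (∫ x, |u x - ubar x| ∂μ) ^ (1 + 1/γ) ≤
        J' ubar (fun x => u x - ubar x) + J'' ubar (fun x => u x - ubar x))
    (hcont : ∀ ε > 0, ∃ δ > 0, ∀ u ∈ Uad, ∀ θ : Ω → ℝ, Measurable θ →
      (∀ x, θ x ∈ Set.Icc (0:ℝ) 1) → (∫ x, |u x - ubar x| ∂μ) < δ →
      |J'' (fun x => ubar x + θ x * (u x - ubar x)) (fun x => u x - ubar x)
        - J'' ubar (fun x => u x - ubar x)| ≤ ε * (∫ x, |u x - ubar x| ∂μ) ^ (1 + 1/γ))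
    (hTaylor : ∀ u ∈ Uad, ∃ θ : Ω → ℝ, Measurable θ ∧ (∀ x, θ x ∈ Set.Icc (0:ℝ) 1) ∧
      J u - J ubar = J' ubar (fun x => u x - ubar x)
        + (1/2) * J'' (fun x => ubar x + θ x * (u x - ubar x)) (fun x => u x - ubar x)) :
    ∃ κ' > 0, ∃ α' > 0, ∀ u ∈ Uad, (∫ x, |u x - ubar x| ∂μ) < α' →
      κ' * (∫ x, |u x - ubar x| ∂μ) ^ (1 + 1/γ) ≤ J u - J ubar := by
  obtain ⟨δ, hδ, hclose⟩ := hcont (κ / 2) (half_pos hκ)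
  refine ⟨κ / 4, by positivity, min α δ, lt_min hα hδ, fun u hu hdist => ?_⟩
  obtain ⟨θ, hθ, hθ01, hTaylor_u⟩ := hTaylor u hu
  rw [hTaylor_u]
  exact taylor_lower_bound_of_growth (hfoc u hu)
    (hgrowth u hu (hdist.trans_le (min_le_left _ _)))
    (hclose u hu θ hθ hθ01 (hdist.trans_le (min_le_right _ _)))

/-- Under the growth condition on the first and second variations at `ubar`,
the second-variation continuity estimate, and Taylor's theorem, `ubar` is a strict local
minimizer in the `L¹` sense with the same Hölder-type growth. -/
theorem strict_local_growth
    {Ω : Type*} [MeasurableSpace Ω] (μ : Measure Ω)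
    (a b : ℝ) (hab : a < b)
    (J : (Ω → ℝ) → ℝ)
    (J' : (Ω → ℝ) → (Ω → ℝ) → ℝ)    -- first directional derivative
    (J'' : (Ω → ℝ) → (Ω → ℝ) → ℝ)   -- second derivative along the repeated direction
    (Uad : Set (Ω → ℝ))
    (hUad : Uad = {v | MemLp v 2 μ ∧ ∀ᵐ x ∂μ, a ≤ v x ∧ v x ≤ b})
    (ubar : Ω → ℝ) (hubar : ubar ∈ Uad)
    (hfoc : ∀ u ∈ Uad, 0 ≤ J' ubar (fun x => u x - ubar x))
    (κ α γ : ℝ) (hκ : 0 < κ) (hα : 0 < α) (hγ : γ ∈ Set.Ioc (0:ℝ) 1)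
    (hgrowth : ∀ u ∈ Uad, (∫ x, |u x - ubar x| ∂μ) < α →
      κ * (∫ x, |u x - ubar x| ∂μ) ^ (1 + 1/γ) ≤
        J' ubar (fun x => u x - ubar x) + J'' ubar (fun x => u x - ubar x))
    (hcont : ∀ ε > 0, ∃ δ > 0, ∀ u ∈ Uad, ∀ θ : Ω → ℝ, Measurable θ →
      (∀ x, θ x ∈ Set.Icc (0:ℝ) 1) → (∫ x, |u x - ubar x| ∂μ) < δ →
      |J'' (fun x => ubar x + θ x * (u x - ubar x)) (fun x => u x - ubar x)
        - J'' ubar (fun x => u x - ubar x)| ≤ ε * (∫ x, |u x - ubar x| ∂μ) ^ (1 + 1/γ))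
    (hTaylor : ∀ u ∈ Uad, ∃ θ : Ω → ℝ, Measurable θ ∧ (∀ x, θ x ∈ Set.Icc (0:ℝ) 1) ∧
      J u - J ubar = J' ubar (fun x => u x - ubar x)
        + (1/2) * J'' (fun x => ubar x + θ x * (u x - ubar x)) (fun x => u x - ubar x)) :
    ∃ κ' > 0, ∃ α' > 0, ∀ u ∈ Uad, (∫ x, |u x - ubar x| ∂μ) < α' →
      κ' * (∫ x, |u x - ubar x| ∂μ) ^ (1 + 1/γ) ≤ J u - J ubar :=
  strict_local_growth_general μ J J' J'' Uad ubar hfoc κ α γ hκ hα hgrowth hcont hTaylor
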